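/- arXiv:2305.05408 — 2 statements merged into one kernel-verified Lean document; each statement's English description precedes it below -/
import Mathlib

section
/- Let N and M be odd positive integers, let λ, d > 0 with d̄ = d/λ, and let Γ ≥ M be a positive real number. Let (r,θ) and (r',θ') be two points with r, r' > 0 and θ, θ' ∈ [−π/2, π/2]; for each n ∈ {0, ±1, …, ±(N−1)/2} set y_n = nΓd, r_n = √(r² − 2r·y_n·sinθ + y_n²) and r'_n = √(r'² − 2r'·y_n·sinθ' + y_n²), and set Δθ = sinθ − sinθ'. Assume sin(π d̄ Δθ) ≠ 0. Then (1/(MN)) · |Σ_{n=-(N-1)/2}^{(N-1)/2} Σ_{m=-(M-1)/2}^{(M-1)/2} exp(−i·(2π/λ)·(r_n − r'_n))·exp(i·2π·m·d̄·Δθ)| = (1/N)·|Σ_{n=-(N-1)/2}^{(N-1)/2} exp(−i·(2π/λ)·(r_n − r'_n))| · |sin(π M d̄ Δθ)/(M·sin(π d̄ Δθ))|. (Theorem 3: under the sub-array based USW model with common angle, the near-field beam focusing pattern splits into the product of the USW beam focusing pattern of an N-element sparse ULA and the UPW Dirichlet-kernel beam pattern of an M-element collocated ULA.) -/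
open Real

/-!
With a common angle the phase of element `(n, m)` is the sum of a module phase and the
intra-module phase `2π m d̄ Δθ`, so the double sum is the product of the module sum and a
symmetric Dirichlet kernel. With `a = π d̄ Δθ`, multiplying the kernel by `2i sin a` turns its
terms `e^{2ima}` into differences `e^{i(2m+1)a} - e^{i(2m-1)a}`, so it telescopes to
`2i sin (M a)`.
-/

section

open Complex Finset

theorem Int.sum_Ico_sub {G : Type*} [AddCommGroup G] (f : ℤ → G) {a b : ℤ} (hab : a ≤ b) :
    ∑ i ∈ Ico a b, (f (i + 1) - f i) = f b - f a := by
  induction b, hab using Int.leInduction with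
  | base => simp
  | succ b hab ih =>
    rw [← insert_Ico_right_eq_Ico_add_one hab, sum_insert right_notMem_Ico, ih]
    abel

theorem Complex.exp_mul_I_sub_exp_neg_mul_I (x : ℂ) :
    cexp (x * I) - cexp (-x * I) = 2 * I * sin x := by
  linear_combination (-I) * two_sin x - (cexp (-x * I) - cexp (x * I)) * I_sq

theorem sum_Icc_exp_two_mul_I_eq_sin_div_sin (k : ℕ) (a : ℝ) (ha : Real.sin a ≠ 0) :
    ∑ m ∈ Icc (-(k : ℤ)) k, cexp (I * (2 * m * a)) =
      ((Real.sin ((2 * k + 1) * a) / Real.sin a : ℝ) : ℂ) := by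
  set f : ℤ → ℂ := fun m ↦ cexp ((2 * m - 1) * a * I)
  have hstep : ∀ m : ℤ, 2 * I * Complex.sin a * cexp (I * (2 * m * a)) = f (m + 1) - f m := by
    intro m
    rw [← exp_mul_I_sub_exp_neg_mul_I, sub_mul, ← Complex.exp_add, ← Complex.exp_add]
    simp only [f]; push_cast; ring_nf
  have htelescope : 2 * I * (Complex.sin a * ∑ m ∈ Icc (-(k : ℤ)) k, cexp (I * (2 * m * a))) =
      2 * I * Complex.sin ((2 * k + 1) * a) := by
    rw [← mul_assoc, mul_sum, ← Ico_add_one_right_eq_Icc, sum_congr rfl fun m _ ↦ hstep m,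
      Int.sum_Ico_sub f (by omega), ← exp_mul_I_sub_exp_neg_mul_I]
    simp only [f]; push_cast; ring_nf
  have hsin : Complex.sin a ≠ 0 := by exact_mod_cast ha
  push_cast
  rw [eq_div_iff hsin, mul_comm]
  exact mul_left_cancel₀ (by simp [Complex.I_ne_zero]) htelescope

theorem sum_Icc_exp_two_mul_I_eq_sin_div_sin_of_odd {M : ℕ} (hM : Odd M) {a : ℝ}
    (ha : Real.sin a ≠ 0) :
    ∑ m ∈ Icc (-(((M : ℤ) - 1) / 2)) (((M : ℤ) - 1) / 2), cexp (I * (2 * m * a)) =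
      ((Real.sin (M * a) / Real.sin a : ℝ) : ℂ) := by
  obtain ⟨k, rfl⟩ := hM
  rw [show ((↑(2 * k + 1) : ℤ) - 1) / 2 = k by omega]
  push_cast
  exact_mod_cast sum_Icc_exp_two_mul_I_eq_sin_div_sin k a ha

end

theorem usw_common_angle_beam_focusing_pattern_general
    (N M : ℕ) (hModd : Odd M)
    (lam : ℝ) (dbar : ℝ)
    (rn rn' : ℤ → ℝ) (Δθ : ℝ)
    (hsin : Real.sin (π * dbar * Δθ) ≠ 0) :
    (1 / ((M : ℝ) * N)) *
      ‖(∑ n ∈ Finset.Icc (-(((N : ℤ) - 1) / 2)) (((N : ℤ) - 1) / 2),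
        ∑ m ∈ Finset.Icc (-(((M : ℤ) - 1) / 2)) (((M : ℤ) - 1) / 2),
          Complex.exp (-Complex.I * ((2 * π / lam) * (rn n - rn' n))) *
            Complex.exp (Complex.I * (2 * π * (m : ℝ) * dbar * Δθ)))‖ =
    (1 / (N : ℝ)) *
      ‖(∑ n ∈ Finset.Icc (-(((N : ℤ) - 1) / 2)) (((N : ℤ) - 1) / 2),
        Complex.exp (-Complex.I * ((2 * π / lam) * (rn n - rn' n))))‖ *
      |Real.sin (π * M * dbar * Δθ) / (M * Real.sin (π * dbar * Δθ))| := by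
  set a := π * dbar * Δθ
  have hdirichlet : ∑ m ∈ Finset.Icc (-(((M : ℤ) - 1) / 2)) (((M : ℤ) - 1) / 2),
      Complex.exp (Complex.I * (2 * π * (m : ℝ) * dbar * Δθ)) =
        ((Real.sin (M * a) / Real.sin a : ℝ) : ℂ) := by
    rw [← sum_Icc_exp_two_mul_I_eq_sin_div_sin_of_odd hModd hsin]
    refine Finset.sum_congr rfl fun m _ ↦ ?_
    simp only [a]; push_cast; ring_nf
  rw [← Finset.sum_mul_sum, hdirichlet, norm_mul, Complex.norm_real, Real.norm_eq_abs,
    show π * M * dbar * Δθ = M * a by ring, abs_div, abs_div, abs_mul, Nat.abs_cast]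
  ring

/-- Theorem 3: under the sub-array based USW model with common
angle, the near-field beam focusing pattern splits into the product of the USW
beam focusing pattern of an `N`-element sparse ULA and the UPW Dirichlet-kernel
beam pattern of an `M`-element collocated ULA. -/
theorem usw_common_angle_beam_focusing_pattern
    (N M : ℕ) (hNpos : 0 < N) (hNodd : Odd N) (hMpos : 0 < M) (hModd : Odd M)
    (lam d Γ : ℝ) (hlam : 0 < lam) (hd : 0 < d) (hΓpos : 0 < Γ) (hΓ : (M : ℝ) ≤ Γ)
    (dbar : ℝ) (hdbar : dbar = d / lam)
    (r r' θ θ' : ℝ) (hr : 0 < r) (hr' : 0 < r')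
    (hθ : θ ∈ Set.Icc (-(π / 2)) (π / 2)) (hθ' : θ' ∈ Set.Icc (-(π / 2)) (π / 2))
    (y rn rn' : ℤ → ℝ) (Δθ : ℝ)
    (hy : ∀ n, y n = (n : ℝ) * Γ * d)
    (hrn : ∀ n, rn n = Real.sqrt (r ^ 2 - 2 * r * y n * Real.sin θ + (y n) ^ 2))
    (hrn' : ∀ n, rn' n = Real.sqrt (r' ^ 2 - 2 * r' * y n * Real.sin θ' + (y n) ^ 2))
    (hΔθ : Δθ = Real.sin θ - Real.sin θ')
    (hsin : Real.sin (π * dbar * Δθ) ≠ 0) :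
    (1 / ((M : ℝ) * N)) *
      ‖(∑ n ∈ Finset.Icc (-(((N : ℤ) - 1) / 2)) (((N : ℤ) - 1) / 2),
        ∑ m ∈ Finset.Icc (-(((M : ℤ) - 1) / 2)) (((M : ℤ) - 1) / 2),
          Complex.exp (-Complex.I * ((2 * π / lam) * (rn n - rn' n))) *
            Complex.exp (Complex.I * (2 * π * (m : ℝ) * dbar * Δθ)))‖ =
    (1 / (N : ℝ)) *
      ‖(∑ n ∈ Finset.Icc (-(((N : ℤ) - 1) / 2)) (((N : ℤ) - 1) / 2),
        Complex.exp (-Complex.I * ((2 * π / lam) * (rn n - rn' n))))‖ *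
      |Real.sin (π * M * dbar * Δθ) / (M * Real.sin (π * dbar * Δθ))| :=
  usw_common_angle_beam_focusing_pattern_general N M hModd lam dbar rn rn' Δθ hsin
end

section
/- Let ν be a nonzero real number, μ ∈ ℝ, and let T > 0 be a real number. Define the complex Fresnel integral F(x) = ∫_0^x exp(i·t²) dt for x ∈ ℝ. Then |∫_{−1/2}^{1/2} exp(i·(ν·T²·x² + μ·T·x)) dx| = |F(√|ν|·T/2 + μ/(2√|ν|)) + F(√|ν|·T/2 − μ/(2√|ν|))| / (√|ν|·T). (The modulus of the quadratic-phase integral is given by Fresnel integrals for both signs of ν, covering cases 1 and 3 in the proof of Corollary 2.) -/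
/-!
For `ν > 0`, completing the square writes the phase as `(√ν T x + μ / (2√ν))² - μ² / (4ν)`; the
constant part is a unimodular factor, and the substitution `u = √ν T x + μ / (2√ν)` turns the
integral into `(√ν T)⁻¹ ∫ exp (i u²)` over `[-(√ν T/2 - μ/(2√ν)), √ν T/2 + μ/(2√ν)]`, which
splits at `0` into the two Fresnel values because `F` is odd. For `ν < 0` complex conjugation
changes `(ν, μ)` into `(-ν, -μ)` without changing the modulus.
-/

open Real Complex MeasureTheory

noncomputable def fresnelIntegral (x : ℝ) : ℂ :=
  ∫ t in (0 : ℝ)..x, cexp (I * (t : ℂ) ^ 2)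

lemma fresnelIntegral_neg (x : ℝ) : fresnelIntegral (-x) = -fresnelIntegral x := by
  have h := intervalIntegral.integral_comp_neg (a := (0 : ℝ)) (b := x)
    fun t : ℝ => cexp (I * (t : ℂ) ^ 2)
  simp only [ofReal_neg, neg_sq, neg_zero] at h
  rw [fresnelIntegral, fresnelIntegral, intervalIntegral.integral_symm, h]

lemma integral_exp_I_mul_sq_comp_mul_add {c : ℝ} (hc : c ≠ 0) (d a b : ℝ) :
    ∫ x in a..b, cexp (I * ((c * x + d : ℝ) : ℂ) ^ 2) =
      (c : ℂ)⁻¹ * (fresnelIntegral (c * b + d) - fresnelIntegral (c * a + d)) := by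
  have hint : ∀ u v : ℝ, IntervalIntegrable (fun t : ℝ => cexp (I * (t : ℂ) ^ 2)) volume u v :=
    fun u v => (by fun_prop : Continuous fun t : ℝ => cexp (I * (t : ℂ) ^ 2)).intervalIntegrable u v
  rw [intervalIntegral.integral_comp_mul_add (fun t : ℝ => cexp (I * (t : ℂ) ^ 2)) hc d,
    ← intervalIntegral.integral_interval_sub_left (hint 0 _) (hint 0 _), real_smul, ofReal_inv,
    fresnelIntegral, fresnelIntegral]

lemma integral_exp_I_mul_sq_comp_mul_add_symm {c : ℝ} (hc : c ≠ 0) (d : ℝ) :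
    ∫ x in (-(1 / 2) : ℝ)..(1 / 2), cexp (I * ((c * x + d : ℝ) : ℂ) ^ 2) =
      (c : ℂ)⁻¹ * (fresnelIntegral (c / 2 + d) + fresnelIntegral (c / 2 - d)) := by
  rw [integral_exp_I_mul_sq_comp_mul_add hc, show c * (-(1 / 2)) + d = -(c / 2 - d) by ring,
    fresnelIntegral_neg, sub_neg_eq_add, mul_one_div]

lemma norm_integral_exp_I_mul_add_const (φ : ℝ → ℝ) (c a b : ℝ) :
    ‖∫ x in a..b, cexp (I * ((φ x + c : ℝ) : ℂ))‖ = ‖∫ x in a..b, cexp (I * (φ x : ℂ))‖ := by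
  have hsplit : ∀ x, cexp (I * ((φ x + c : ℝ) : ℂ)) = cexp (I * c) * cexp (I * (φ x : ℂ)) :=
    fun x => by rw [← Complex.exp_add]; push_cast; ring_nf
  simp_rw [hsplit, intervalIntegral.integral_const_mul, norm_mul, norm_exp_I_mul_ofReal, one_mul]

lemma norm_integral_exp_I_mul_neg (φ : ℝ → ℝ) (a b : ℝ) :
    ‖∫ x in a..b, cexp (I * ((-φ x : ℝ) : ℂ))‖ = ‖∫ x in a..b, cexp (I * (φ x : ℂ))‖ := by
  rw [← norm_conj, ← intervalIntegral.intervalIntegral_conj]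
  congr 2
  funext x
  rw [← Complex.exp_conj, map_mul, conj_I, conj_ofReal]
  push_cast
  ring_nf

lemma norm_integral_quadratic_phase_of_pos {ν T : ℝ} (hν : 0 < ν) (hT : 0 < T) (μ : ℝ) :
    ‖∫ x in (-(1 / 2) : ℝ)..(1 / 2), cexp (I * ((ν * T ^ 2 * x ^ 2 + μ * T * x : ℝ) : ℂ))‖ =
      ‖fresnelIntegral (√ν * T / 2 + μ / (2 * √ν)) +
          fresnelIntegral (√ν * T / 2 - μ / (2 * √ν))‖ / (√ν * T) := by
  have hs : 0 < √ν := sqrt_pos.mpr hν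
  have hsT : 0 < √ν * T := mul_pos hs hT
  have complete_square : ∀ x : ℝ, ν * T ^ 2 * x ^ 2 + μ * T * x =
      (√ν * T * x + μ / (2 * √ν)) ^ 2 + -(μ ^ 2 / (4 * ν)) := fun x => by
    field_simp
    rw [sq_sqrt hν.le]
    ring
  calc _ = ‖∫ x in (-(1 / 2) : ℝ)..(1 / 2),
          cexp (I * (((√ν * T * x + μ / (2 * √ν)) ^ 2 + -(μ ^ 2 / (4 * ν)) : ℝ) : ℂ))‖ := by
        simp_rw [complete_square]
    _ = ‖∫ x in (-(1 / 2) : ℝ)..(1 / 2), cexp (I * ((√ν * T * x + μ / (2 * √ν) : ℝ) : ℂ) ^ 2)‖ := by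
        simp_rw [norm_integral_exp_I_mul_add_const, ofReal_pow]
    _ = _ := by
        rw [integral_exp_I_mul_sq_comp_mul_add_symm hsT.ne', norm_mul, norm_inv, norm_real,
          norm_of_nonneg hsT.le, inv_mul_eq_div]

/-- the modulus of the quadratic-phase integral is given by
Fresnel integrals, for both signs of `ν`. -/
theorem quadratic_phase_integral_abs_fresnel
    (ν μ T : ℝ) (hν : ν ≠ 0) (hT : 0 < T)
    (F : ℝ → ℂ)
    (hF : ∀ x : ℝ, F x = ∫ t in (0 : ℝ)..x, Complex.exp (Complex.I * (t : ℂ) ^ 2)) :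
    ‖∫ x in (-(1 / 2) : ℝ)..(1 / 2),
        Complex.exp (Complex.I * ((ν * T ^ 2 * x ^ 2 + μ * T * x : ℝ) : ℂ))‖ =
    ‖F (Real.sqrt |ν| * T / 2 + μ / (2 * Real.sqrt |ν|)) +
        F (Real.sqrt |ν| * T / 2 - μ / (2 * Real.sqrt |ν|))‖ /
      (Real.sqrt |ν| * T) := by
  obtain rfl : F = fresnelIntegral := funext hF
  rcases hν.lt_or_gt with hneg | hpos
  · have hconj : ∀ x : ℝ, ν * T ^ 2 * x ^ 2 + μ * T * x = -(-ν * T ^ 2 * x ^ 2 + -μ * T * x) :=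
      fun x => by ring
    simp_rw [hconj, norm_integral_exp_I_mul_neg,
      norm_integral_quadratic_phase_of_pos (neg_pos.mpr hneg) hT, abs_of_neg hneg, neg_div,
      sub_neg_eq_add, ← sub_eq_add_neg, add_comm]
  · rw [abs_of_pos hpos, norm_integral_quadratic_phase_of_pos hpos hT]
end
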